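/- Let p be a prime, k ≥ 1, and let w be a recurrent infinite word over ℕ. Then there exists n ∈ ℕ such that for every m ≥ 0 for which the prefix w_n of w of length n is also a prefix of T^m w, one has φ_k(A_{w_m}) · U_k(w) = U_k(w), where the left-hand side is the set { φ_k(A_{w_m})·M : M ∈ U_k(w) }. -/

import Mathlib

open Matrix Filter

/-- The matrix `A_a = [[0,1],[1,a]]` associated to a letter `a`. -/
def Amat (a : ℕ) : Matrix (Fin 2) (Fin 2) ℤ := !![0, 1; 1, (a : ℤ)]

/-- The matrix `A_u` associated to a finite word `u` (product of the `A_a`). -/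
def Aword (u : List ℕ) : Matrix (Fin 2) (Fin 2) ℤ := (u.map Amat).prod

/-- The prefix of length `n` of an infinite word `w`. -/
def wordPrefix (w : ℕ → ℕ) (n : ℕ) : List ℕ := (List.range n).map w

/-- The left shift `T^m w` of an infinite word. -/
def shiftW (w : ℕ → ℕ) (m : ℕ) : ℕ → ℕ := fun i => w (m + i)

/-- Distance from a real number to the nearest integer. -/
noncomputable def distNearestInt (t : ℝ) : ℝ := |t - round t|

/-- `q ∈ PBad_ε` : `q` is a `p`-adically badly approximable vector with constant `ε`. -/
def PBadE (p : ℕ) [Fact p.Prime] (ε : ℝ) (q : Fin 2 → ℚ_[p]) : Prop :=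
  ∀ a b : ℤ, ¬(a = 0 ∧ b = 0) →
    ε / max ((a : ℝ) ^ 2) ((b : ℝ) ^ 2) ≤
      ‖(a : ℚ_[p]) * q 0 + (b : ℚ_[p]) * q 1‖ / max ‖q 0‖ ‖q 1‖

/-- An integer matrix viewed as a matrix over `ℚ_[p]`. -/
noncomputable def matQ (p : ℕ) [Fact p.Prime] (M : Matrix (Fin 2) (Fin 2) ℤ) :
    Matrix (Fin 2) (Fin 2) ℚ_[p] := M.map Int.cast

/-- `(w, y) ∈ LMad_ε`. -/
def LMadE (p : ℕ) [Fact p.Prime] (ε : ℝ) (w : ℕ → ℕ) (y : Fin 2 → ℚ_[p]) : Prop :=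
  (∀ n, 1 ≤ w n ∧ (w n : ℤ) ≤ ⌊ε⁻¹⌋ + 1) ∧
  ∀ n : ℕ, PBadE p ε (Matrix.mulVec (matQ p (Aword (wordPrefix w n))ᵀ) y)

/-- `(w, y) ∈ LMad`. -/
def LMad (p : ℕ) [Fact p.Prime] (w : ℕ → ℕ) (y : Fin 2 → ℚ_[p]) : Prop :=
  ∃ ε > 0, LMadE p ε w y

/-- The projective distance `d` on nonzero vectors of `ℚ_[p]²`. -/
noncomputable def pdist (p : ℕ) [Fact p.Prime] (u v : Fin 2 → ℚ_[p]) : ℝ :=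
  ‖u 0 * v 1 - u 1 * v 0‖ / (max ‖u 0‖ ‖u 1‖ * max ‖v 0‖ ‖v 1‖)

/-- `q ∈ B_k(w, y)` : `q` is `p^{-k}`-close to some `(A_{w_n})ᵀ y`. -/
def inBk (p : ℕ) [Fact p.Prime] (k : ℕ) (w : ℕ → ℕ) (y : Fin 2 → ℚ_[p])
    (q : Fin 2 → ℚ_[p]) : Prop :=
  q ≠ 0 ∧ ∃ n : ℕ,
    pdist p q (Matrix.mulVec (matQ p (Aword (wordPrefix w n))ᵀ) y) ≤ (p : ℝ) ^ (-(k : ℤ))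

/-- `U_k(w)` : set of reductions mod `p^k` of the matrices of all prefixes of `w`. -/
def Uk (p k : ℕ) (w : ℕ → ℕ) : Set (Matrix (Fin 2) (Fin 2) (ZMod (p ^ k))) :=
  { M | ∃ n : ℕ, M = (Aword (wordPrefix w n)).map Int.cast }

/-- The finite word `u` occurs in `w` at position `m`. -/
def occursAt (w : ℕ → ℕ) (u : List ℕ) (m : ℕ) : Prop :=
  u = (List.range u.length).map fun i => w (m + i)

/-- `u` is a factor of the infinite word `w`. -/
def IsFactor (u : List ℕ) (w : ℕ → ℕ) : Prop := ∃ m, occursAt w u m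

/-- `w` is recurrent: every factor occurs infinitely often. -/
def Recurrent (w : ℕ → ℕ) : Prop :=
  ∀ u : List ℕ, IsFactor u w → ∀ M : ℕ, ∃ m, M ≤ m ∧ occursAt w u m

/-- `w` is uniformly recurrent: recurrent with bounded gaps between occurrences. -/
def UniformlyRecurrent (w : ℕ → ℕ) : Prop :=
  Recurrent w ∧
    ∀ u : List ℕ, IsFactor u w →
      ∃ d : ℕ, ∀ m : ℕ, ∃ m', m ≤ m' ∧ m' ≤ m + d ∧ occursAt w u m'

/-- The complexity `P(w, n)` : number of distinct factors of `w` of length `n`. -/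
noncomputable def complexity (w : ℕ → ℕ) (n : ℕ) : ℕ :=
  Set.ncard { u : List ℕ | u.length = n ∧ IsFactor u w }

/-- `a` is the sequence of partial quotients of the continued fraction expansion of `x`,
obtained by iterating the Gauss map. -/
def IsCFSeq (x : ℝ) (a : ℕ → ℕ) : Prop :=
  ∃ ξ : ℕ → ℝ, ξ 0 = x ∧
    ∀ n, (0 < ξ n ∧ ξ n < 1) ∧ ((a n : ℤ) = ⌊(ξ n)⁻¹⌋) ∧ ξ (n + 1) = (ξ n)⁻¹ - (a n : ℝ)

/-- `Q` is the (index-shifted) sequence of denominators of the convergents of the continued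
fraction with partial quotients `a` : `Q (n+1)` is the paper's `q_n`. -/
def IsCFDen (a : ℕ → ℕ) (Q : ℕ → ℤ) : Prop :=
  Q 0 = 0 ∧ Q 1 = 1 ∧ ∀ n, Q (n + 2) = (a n : ℤ) * Q (n + 1) + Q n


/-! Only finitely many matrices mod `p^k` occur, so some `n` is such that every element of
`U_k(w)` is already `φ_k(A_{w_j})` for some `j ≤ n`. If `w_n` is a prefix of `T^m w`, then
`A_{w_m} A_{w_j} = A_{w_{m+j}}` for all `j ≤ n`, hence `φ_k(A_{w_m}) · U_k(w) ⊆ U_k(w)`; since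
`φ_k(A_{w_m})` is invertible (`det A_a = -1`), left multiplication by it is injective and the
inclusion between finite sets of equal size is an equality. -/

lemma Set.image_mul_left_eq_of_subset {M : Type*} [Monoid M] {a : M} (ha : IsUnit a)
    {S : Set M} (hS : S.Finite) (h : (a * ·) '' S ⊆ S) : (a * ·) '' S = S :=
  Set.eq_of_subset_of_ncard_le h (Set.ncard_image_of_injective _ ha.mul_right_injective).ge hS

lemma exists_forall_exists_le_eq_of_finite_range {α : Type*} {f : ℕ → α}
    (hf : (Set.range f).Finite) : ∃ n, ∀ j, ∃ i ≤ n, f i = f j := by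
  have := hf.to_subtype
  choose F hF using fun x : Set.range f => x.2
  obtain ⟨n, hn⟩ := (Set.finite_range F).bddAbove
  exact ⟨n, fun j => ⟨F ⟨f j, j, rfl⟩, hn ⟨_, rfl⟩, hF _⟩⟩

lemma Aword_append (u v : List ℕ) : Aword (u ++ v) = Aword u * Aword v := by
  simp [Aword]

lemma isUnit_Amat (a : ℕ) : IsUnit (Amat a) := by
  rw [Matrix.isUnit_iff_isUnit_det]
  simp [Amat, Matrix.det_fin_two_of]

lemma isUnit_Aword (u : List ℕ) : IsUnit (Aword u) :=
  List.prod_isUnit <| by simpa using fun a _ => isUnit_Amat a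

lemma wordPrefix_add (w : ℕ → ℕ) (m j : ℕ) :
    wordPrefix w (m + j) = wordPrefix w m ++ wordPrefix (shiftW w m) j := by
  simp [wordPrefix, shiftW, List.range_add, Function.comp_def]

lemma wordPrefix_eq_of_le {u v : ℕ → ℕ} {n j : ℕ} (h : wordPrefix u n = wordPrefix v n)
    (hj : j ≤ n) : wordPrefix u j = wordPrefix v j := by
  have := congrArg (List.take j) h
  simpa only [wordPrefix, ← List.map_take, List.take_range, min_eq_left hj] using this

lemma Aword_wordPrefix_add {w : ℕ → ℕ} {m n j : ℕ}
    (h : wordPrefix w n = wordPrefix (shiftW w m) n) (hj : j ≤ n) :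
    Aword (wordPrefix w (m + j)) = Aword (wordPrefix w m) * Aword (wordPrefix w j) := by
  rw [wordPrefix_add, Aword_append, ← wordPrefix_eq_of_le h hj]

theorem stmt_14_general (p : ℕ) [Fact p.Prime] (k : ℕ)
    (w : ℕ → ℕ) :
    ∃ n : ℕ, ∀ m : ℕ, wordPrefix w n = wordPrefix (shiftW w m) n →
      (fun M : Matrix (Fin 2) (Fin 2) (ZMod (p ^ k)) =>
          ((Aword (wordPrefix w m)).map (Int.cast : ℤ → ZMod (p ^ k))) * M) ''
        Uk p k w = Uk p k w := by
  have : NeZero (p ^ k) := ⟨pow_ne_zero k (Fact.out : p.Prime).ne_zero⟩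
  let φ := (Int.castRingHom (ZMod (p ^ k))).mapMatrix (m := Fin 2)
  have hUk : Uk p k w = Set.range fun j => φ (Aword (wordPrefix w j)) := by
    ext M
    simp [Uk, φ, eq_comm]
  obtain ⟨n, hn⟩ := exists_forall_exists_le_eq_of_finite_range (hUk ▸ Set.toFinite (Uk p k w))
  refine ⟨n, fun m hm => ?_⟩
  rw [hUk]
  refine Set.image_mul_left_eq_of_subset ((isUnit_Aword _).map φ) (Set.toFinite _) ?_
  rintro _ ⟨_, ⟨j, rfl⟩, rfl⟩
  obtain ⟨i, hi, hij⟩ := hn j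
  exact ⟨m + i, by dsimp only; rw [Aword_wordPrefix_add hm hi, map_mul, hij]⟩

/-- for a recurrent word `w` there is `n` such that whenever `w_n` is a
prefix of `T^m w`, `φ_k(A_{w_m}) · U_k(w) = U_k(w)`. -/
theorem stmt_14 (p : ℕ) [Fact p.Prime] (k : ℕ) (hk : 1 ≤ k)
    (w : ℕ → ℕ) (hrec : Recurrent w) :
    ∃ n : ℕ, ∀ m : ℕ, wordPrefix w n = wordPrefix (shiftW w m) n →
      (fun M : Matrix (Fin 2) (Fin 2) (ZMod (p ^ k)) =>
          ((Aword (wordPrefix w m)).map (Int.cast : ℤ → ZMod (p ^ k))) * M) ''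
        Uk p k w = Uk p k w :=
  stmt_14_general p k w
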